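/- (Corollary 1.4.) For every fixed z ∈ ℂ, ρ_{n,v}(z) → 0 as |v| → ∞; moreover, for every bounded Borel set Θ ⊆ ℂ, E[N_Θ^{Φ_n,v}] → 0 as |v| → ∞. -/

import Mathlib

open MeasureTheory Polynomial Filter Metric
open ComplexConjugate
open scoped Classical

/-- The standard complex Gaussian probability measure on `ℂ^{n+1}`, with density
`π^{-(n+1)} exp(-∑ |η_j|²)` with respect to Lebesgue measure. -/
noncomputable def gaussianC (n : ℕ) : Measure (Fin (n + 1) → ℂ) :=
  volume.withDensity fun η =>
    ENNReal.ofReal ((Real.pi ^ (n + 1))⁻¹ * Real.exp (-∑ j, ‖η j‖ ^ 2))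

/-- The random polynomial `Φ_η = ∑_{j=0}^n η_j φ_j`. -/
noncomputable def Phi (n : ℕ) (φ : ℕ → Polynomial ℂ) (η : Fin (n + 1) → ℂ) : Polynomial ℂ :=
  ∑ j : Fin (n + 1), Polynomial.C (η j) * φ (j : ℕ)

/-- The number of zeros of `Φ_η − v` lying in `Θ`, counted with multiplicity. -/
noncomputable def Nzeros (n : ℕ) (φ : ℕ → Polynomial ℂ) (Θ : Set ℂ) (v : ℂ)
    (η : Fin (n + 1) → ℂ) : ℕ :=
  Multiset.card ((Phi n φ η - Polynomial.C v).roots.filter (· ∈ Θ))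

/-- Diagonal Christoffel–Darboux kernel `K_n(z,z) = ∑_{j=0}^n |φ_j(z)|²`. -/
noncomputable def Kd (φ : ℕ → Polynomial ℂ) (n : ℕ) (z : ℂ) : ℝ :=
  ∑ j : Fin (n + 1), ‖(φ (j : ℕ)).eval z‖ ^ 2

/-- `K_n^{(0,1)}(z,z) = ∑_{j=0}^n φ_j(z) conj(φ_j'(z))`. -/
noncomputable def K01 (φ : ℕ → Polynomial ℂ) (n : ℕ) (z : ℂ) : ℂ :=
  ∑ j : Fin (n + 1), (φ (j : ℕ)).eval z * conj ((Polynomial.derivative (φ (j : ℕ))).eval z)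

/-- `K_n^{(1,1)}(z,z) = ∑_{j=0}^n |φ_j'(z)|²`. -/
noncomputable def K11 (φ : ℕ → Polynomial ℂ) (n : ℕ) (z : ℂ) : ℝ :=
  ∑ j : Fin (n + 1), ‖(Polynomial.derivative (φ (j : ℕ))).eval z‖ ^ 2

/-- The density `ρ_{n,v}(z)` of Theorem 1.3. -/
noncomputable def rhoDens (φ : ℕ → Polynomial ℂ) (n : ℕ) (v z : ℂ) : ℝ :=
  (1 / Real.pi) *
    (K11 φ n z / Kd φ n z -
      (‖K01 φ n z‖ ^ 2 / (Kd φ n z) ^ 2) * (1 - ‖v‖ ^ 2 / Kd φ n z)) *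
    Real.exp (-‖v‖ ^ 2 / Kd φ n z)

/-!
For fixed `z`, `ρ_{n,v}(z)` has the form `(a + b s) e^{-s}` with `s = |v|² / K_n(z,z)`, and
`K_n(z,z) ≥ 1`, so it tends to `0`. For the mean number of zeros: on the bounded set `Θ`
every `φ_j` is bounded by some `C_j`, so `Φ_η - v` can only vanish in `Θ` if
`|v| ≤ g(η) := ∑ C_j |η_j|`; and it has at most `n` zeros since `deg Φ_η ≤ n`. Hence
`E[N_Θ^v] ≤ n · γ(g ≥ |v|)`, which tends to `0` because `γ` is a finite measure.
-/

open Bornology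
open scoped Topology

lemma integrable_exp_neg_sq_norm {V : Type*} [NormedAddCommGroup V] [InnerProductSpace ℝ V]
    [FiniteDimensional ℝ V] [MeasurableSpace V] [BorelSpace V] :
    Integrable (fun v : V => Real.exp (-‖v‖ ^ 2)) := by
  refine (GaussianFourier.integrable_cexp_neg_mul_sq_norm_add (V := V) (b := 1) (by simp) 0 0)
    |>.norm |>.congr (.of_forall fun v => ?_)
  simp only [zero_mul, add_zero, Complex.norm_exp]
  norm_cast
  simp

instance gaussianC.instIsFiniteMeasure (n : ℕ) : IsFiniteMeasure (gaussianC n) := by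
  refine isFiniteMeasure_withDensity_ofReal (Integrable.hasFiniteIntegral ?_)
  refine ((Integrable.fintype_prod
    (f := fun _ : Fin (n + 1) => fun z : ℂ => Real.exp (-‖z‖ ^ 2))
    fun _ => integrable_exp_neg_sq_norm).const_mul (Real.pi ^ (n + 1))⁻¹).congr
    (.of_forall fun η => ?_)
  simp only [← Real.exp_sum, Finset.sum_neg_distrib]

lemma tendsto_measure_setOf_le_atTop {α : Type*} [MeasurableSpace α] (μ : Measure α)
    [IsFiniteMeasure μ] {g : α → ℝ} (hg : Measurable g) :
    Tendsto (fun r => μ {x | r ≤ g x}) atTop (𝓝 0) := by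
  have hempty : ⋂ r : ℝ, {x | r ≤ g x} = ∅ :=
    Set.eq_empty_of_forall_notMem fun x hx =>
      (lt_add_one (g x)).not_ge (Set.mem_iInter.1 hx (g x + 1))
  simpa [hempty, Function.comp_def] using tendsto_measure_iInter_atTop (μ := μ)
    (fun r => (measurableSet_le measurable_const hg).nullMeasurableSet)
    (fun r s hrs x (hx : s ≤ g x) => hrs.trans hx) ⟨0, measure_ne_top μ _⟩

lemma norm_integral_le_of_norm_le_indicator {α E : Type*} [MeasurableSpace α]
    [NormedAddCommGroup E] [NormedSpace ℝ E] {μ : Measure α} [IsFiniteMeasure μ] {f : α → E}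
    {s : Set α} (hs : MeasurableSet s) {c : ℝ}
    (h : ∀ x, ‖f x‖ ≤ s.indicator (fun _ => c) x) :
    ‖∫ x, f x ∂μ‖ ≤ c * μ.real s := by
  have hint : Integrable (s.indicator fun _ => c) μ :=
    (integrable_indicator_iff hs).2 (integrableOn_const (measure_ne_top μ s))
  calc ‖∫ x, f x ∂μ‖ ≤ ∫ x, s.indicator (fun _ => c) x ∂μ :=
        norm_integral_le_of_norm_le hint (.of_forall h)
    _ = c * μ.real s := by rw [integral_indicator_const c hs, smul_eq_mul, mul_comm]

lemma tendsto_affine_mul_exp_neg_atTop (a b : ℝ) :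
    Tendsto (fun s => (a + b * s) * Real.exp (-s)) atTop (𝓝 0) := by
  have h := (Real.tendsto_exp_neg_atTop_nhds_zero.const_mul a).add
    ((Real.tendsto_pow_mul_exp_neg_atTop_nhds_zero 1).const_mul b)
  simpa [add_mul, mul_assoc] using h

section RandomPolynomial

variable {φ : ℕ → Polynomial ℂ} {n : ℕ}

lemma one_le_Kd (hφ0 : φ 0 = 1) (z : ℂ) : 1 ≤ Kd φ n z := by
  simpa [Kd, hφ0] using
    Finset.single_le_sum (f := fun j : Fin (n + 1) => ‖(φ j).eval z‖ ^ 2)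
      (fun _ _ => sq_nonneg _) (Finset.mem_univ 0)

lemma tendsto_rhoDens_cobounded {z : ℂ} (hK : 0 < Kd φ n z) :
    Tendsto (fun v => rhoDens φ n v z) (cobounded ℂ) (𝓝 0) := by
  set A := K11 φ n z / Kd φ n z
  set B := ‖K01 φ n z‖ ^ 2 / Kd φ n z ^ 2
  have hs : Tendsto (fun v : ℂ => ‖v‖ ^ 2 / Kd φ n z) (cobounded ℂ) atTop :=
    ((tendsto_pow_atTop two_ne_zero).atTop_div_const hK).comp tendsto_norm_cobounded_atTop
  refine ((tendsto_affine_mul_exp_neg_atTop ((A - B) / Real.pi) (B / Real.pi)).comp hs).congr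
    fun v => ?_
  simp only [Function.comp_apply, rhoDens, neg_div]
  ring

lemma eval_Phi (η : Fin (n + 1) → ℂ) (z : ℂ) :
    (Phi n φ η).eval z = ∑ j, η j * (φ j).eval z := by
  simp [Phi, eval_finsetSum]

lemma norm_eval_Phi_le {C : ℕ → ℝ} {z : ℂ} (hC : ∀ j, ‖(φ j).eval z‖ ≤ C j)
    (η : Fin (n + 1) → ℂ) : ‖(Phi n φ η).eval z‖ ≤ ∑ j : Fin (n + 1), C j * ‖η j‖ := by
  rw [eval_Phi]
  refine (norm_sum_le _ _).trans (Finset.sum_le_sum fun j _ => ?_)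
  rw [norm_mul, mul_comm]
  exact mul_le_mul_of_nonneg_right (hC j) (norm_nonneg _)

lemma natDegree_Phi_le (hdeg : ∀ j ≤ n, (φ j).natDegree = j) (η : Fin (n + 1) → ℂ) :
    (Phi n φ η).natDegree ≤ n :=
  natDegree_sum_le_of_forall_le _ _ fun j _ =>
    (natDegree_C_mul_le _ _).trans ((hdeg j j.is_le).le.trans j.is_le)

lemma Nzeros_le (hdeg : ∀ j ≤ n, (φ j).natDegree = j) (Θ : Set ℂ) (v : ℂ)
    (η : Fin (n + 1) → ℂ) : Nzeros n φ Θ v η ≤ n :=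
  calc Nzeros n φ Θ v η ≤ Multiset.card (Phi n φ η - C v).roots :=
        Multiset.card_le_card (Multiset.filter_le _ _)
    _ ≤ (Phi n φ η - C v).natDegree := card_roots' _
    _ ≤ n := (natDegree_sub_le _ _).trans (max_le (natDegree_Phi_le hdeg η) (by simp))

lemma Nzeros_eq_zero_of_lt {Θ : Set ℂ} {C : ℕ → ℝ}
    (hC : ∀ j, ∀ z ∈ Θ, ‖(φ j).eval z‖ ≤ C j) {v : ℂ} {η : Fin (n + 1) → ℂ}
    (hv : ∑ j : Fin (n + 1), C j * ‖η j‖ < ‖v‖) :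
    Nzeros n φ Θ v η = 0 := by
  refine Multiset.card_eq_zero.2 (Multiset.filter_eq_nil.2 fun z hz hzΘ => hv.not_ge ?_)
  have hroot : (Phi n φ η).eval z = v := by
    simpa [sub_eq_zero] using (mem_roots'.1 hz).2
  exact hroot ▸ norm_eval_Phi_le (fun j => hC j z hzΘ) η

lemma tendsto_integral_Nzeros_cobounded (hdeg : ∀ j ≤ n, (φ j).natDegree = j) {Θ : Set ℂ}
    (hΘ : Bornology.IsBounded Θ) :
    Tendsto (fun v => ∫ η, (Nzeros n φ Θ v η : ℝ) ∂gaussianC n) (cobounded ℂ) (𝓝 0) := by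
  choose C hC using fun j => hΘ.isCompact_closure.exists_bound_of_continuousOn
    (φ j).continuous.continuousOn
  let g : (Fin (n + 1) → ℂ) → ℝ := fun η => ∑ j : Fin (n + 1), C j * ‖η j‖
  have hg : Measurable g := by fun_prop
  have hbound (v : ℂ) : ‖∫ η, (Nzeros n φ Θ v η : ℝ) ∂gaussianC n‖ ≤
      n * (gaussianC n).real {η | ‖v‖ ≤ g η} := by
    refine norm_integral_le_of_norm_le_indicator (measurableSet_le measurable_const hg)
      fun η => ?_
    by_cases hη : ‖v‖ ≤ g η
    · simpa [Set.indicator_of_mem, hη] using Nzeros_le hdeg Θ v η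
    · simp [hη, Nzeros_eq_zero_of_lt (fun j z hz => hC j z (subset_closure hz)) (not_le.1 hη)]
  have hmeasure := (ENNReal.tendsto_toReal ENNReal.zero_ne_top).comp
    ((tendsto_measure_setOf_le_atTop (gaussianC n) hg).comp
      (tendsto_norm_cobounded_atTop (E := ℂ)))
  refine squeeze_zero_norm hbound ?_
  simpa [Function.comp_def, Measure.real] using hmeasure.const_mul (n : ℝ)

end RandomPolynomial

theorem density_and_mean_tendsto_zero_general (n : ℕ) (φ : ℕ → Polynomial ℂ)
    (hφ0 : φ 0 = 1) (hdeg : ∀ j ≤ n, (φ j).natDegree = j) :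
    (∀ z : ℂ,
      Tendsto (fun v : ℂ => rhoDens φ n v z)
        (Filter.comap (fun v : ℂ => ‖v‖) Filter.atTop) (nhds 0)) ∧
    (∀ Θ : Set ℂ, MeasurableSet Θ → Bornology.IsBounded Θ →
      Tendsto (fun v : ℂ => ∫ η, (Nzeros n φ Θ v η : ℝ) ∂gaussianC n)
        (Filter.comap (fun v : ℂ => ‖v‖) Filter.atTop) (nhds 0)) := by
  rw [comap_norm_atTop]
  exact ⟨fun z => tendsto_rhoDens_cobounded (zero_lt_one.trans_le (one_le_Kd hφ0 z)),
    fun _ _ hΘ => tendsto_integral_Nzeros_cobounded hdeg hΘ⟩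

/-- **Corollary 1.4.** For every fixed `z`, `ρ_{n,v}(z) → 0` as `|v| → ∞`; and for every
bounded Borel set `Θ`, `E[N_Θ^{Φ_n,v}] → 0` as `|v| → ∞`. -/
theorem density_and_mean_tendsto_zero (n : ℕ) (hn : 1 ≤ n) (φ : ℕ → Polynomial ℂ)
    (hφ0 : φ 0 = 1) (hdeg : ∀ j ≤ n, (φ j).natDegree = j) :
    (∀ z : ℂ,
      Tendsto (fun v : ℂ => rhoDens φ n v z)
        (Filter.comap (fun v : ℂ => ‖v‖) Filter.atTop) (nhds 0)) ∧
    (∀ Θ : Set ℂ, MeasurableSet Θ → Bornology.IsBounded Θ →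
      Tendsto (fun v : ℂ => ∫ η, (Nzeros n φ Θ v η : ℝ) ∂gaussianC n)
        (Filter.comap (fun v : ℂ => ‖v‖) Filter.atTop) (nhds 0)) :=
  density_and_mean_tendsto_zero_general n φ hφ0 hdeg
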